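/- Let M be a basic pseudo hoop and f, g ∈ M. Then f ≤ g if and only if Vf ≤ Vg for every value V of M, where Vx denotes the right quotient class of x modulo V. -/
import Mathlib


universe u

structure PseudoHoop (M : Type u) where
  mul : M → M → M
  one : M
  imp : M → M → M
  rimp : M → M → M
  mul_one : ∀ x, mul x one = x
  one_mul : ∀ x, mul one x = x
  imp_self : ∀ x, imp x x = one
  rimp_self : ∀ x, rimp x x = one
  mul_imp : ∀ x y z, imp (mul x y) z = imp x (imp y z)
  mul_rimp : ∀ x y z, rimp (mul x y) z = rimp y (rimp x z)
  div1 : ∀ x y, mul (imp x y) x = mul (imp y x) y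
  div2 : ∀ x y, mul (imp x y) x = mul x (rimp x y)
  div3 : ∀ x y, mul x (rimp x y) = mul y (rimp y x)

namespace PseudoHoop

variable {M : Type u} (H : PseudoHoop M)

/-- The induced order: x ≤ y iff x → y = 1. -/
def le (x y : M) : Prop := H.imp x y = H.one

/-- The derived meet: x ∧ y = (x → y) ⊙ x. -/
def meet (x y : M) : M := H.mul (H.imp x y) x

/-- Powers: a^0 = 1, a^(n+1) = a^n ⊙ a. -/
def pow (a : M) : ℕ → M
  | 0 => H.one
  | n + 1 => H.mul (pow a n) a

/-- j is the least upper bound of x and y. -/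
def IsJoin (x y j : M) : Prop :=
  H.le x j ∧ H.le y j ∧ ∀ c, H.le x c → H.le y c → H.le j c

/-- Prelinearity: (x→y) ∨ (y→x) and (x⇝y) ∨ (y⇝x) exist and equal 1. -/
def Prelinear : Prop :=
  ∀ x y, H.IsJoin (H.imp x y) (H.imp y x) H.one ∧ H.IsJoin (H.rimp x y) (H.rimp y x) H.one

/-- Basic pseudo hoop. -/
def Basic : Prop :=
  (∀ x y z, H.le (H.imp (H.imp x y) z) (H.imp (H.imp (H.imp y x) z) z)) ∧
  (∀ x y z, H.le (H.rimp (H.rimp x y) z) (H.rimp (H.rimp (H.rimp y x) z) z))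

/-- Filters: contain 1, closed under ⊙ and upward closed. -/
def IsFilter (F : Set M) : Prop :=
  H.one ∈ F ∧ (∀ x ∈ F, ∀ y ∈ F, H.mul x y ∈ F) ∧ (∀ x ∈ F, ∀ y, H.le x y → y ∈ F)

/-- Filter generated by a set. -/
def filterGen (S : Set M) : Set M := ⋂₀ {F | H.IsFilter F ∧ S ⊆ F}

/-- Prime filter. -/
def IsPrime (F : Set M) : Prop :=
  H.IsFilter F ∧
    ∀ F₁ F₂, H.IsFilter F₁ → H.IsFilter F₂ → F₁ ∩ F₂ ⊆ F → F₁ ⊆ F ∨ F₂ ⊆ F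

/-- V is a value of g: a filter maximal with respect to not containing g. -/
def IsValueOf (V : Set M) (g : M) : Prop :=
  H.IsFilter V ∧ g ∉ V ∧ ∀ W, H.IsFilter W → V ⊆ W → g ∉ W → W = V

/-- V is a value of M: a value of some g ≠ 1. -/
def IsValue (V : Set M) : Prop := ∃ g, g ≠ H.one ∧ H.IsValueOf V g

/-- Anything of the form `u → v` is fixed by `1 → ·`. -/
lemma my_imp_fixed (u v : M) : H.imp H.one (H.imp u v) = H.imp u v := by
  have h := H.mul_imp H.one u v
  rw [H.one_mul] at h
  exact h.symm

/-- `1 → x = (x → 1) ⊙ x`. -/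
lemma my_one_imp_eq (x : M) : H.imp H.one x = H.mul (H.imp x H.one) x := by
  have h := H.div1 x H.one
  rw [H.mul_one] at h
  exact h.symm

/-- `(1 → x) → 1 = 1`. -/
lemma my_m_imp_one (x : M) : H.imp (H.imp H.one x) H.one = H.one := by
  rw [H.my_one_imp_eq, H.mul_imp]
  exact H.imp_self _

/-- `x = ((1 → x) → x) ⊙ (1 → x)`. -/
lemma my_x_decomp (x : M) :
    H.mul (H.imp (H.imp H.one x) x) (H.imp H.one x) = x := by
  have h2 : H.imp x (H.imp H.one x) = H.one := by
    have h := H.mul_imp x H.one x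
    rw [H.mul_one, H.imp_self] at h
    exact h.symm
  have h := H.div1 (H.imp H.one x) x
  rw [h2, H.one_mul] at h
  exact h

/-- `x → 1 = 1` : `1` is the top element. -/
lemma my_imp_one (x : M) : H.imp x H.one = H.one := by
  conv_lhs => rw [← H.my_x_decomp x]
  rw [H.mul_imp, H.my_m_imp_one]
  rw [← H.my_imp_fixed (H.imp H.one x) x]
  exact H.my_m_imp_one _

/-- `1 → x = x`. -/
lemma my_one_imp (x : M) : H.imp H.one x = x := by
  rw [H.my_one_imp_eq, H.my_imp_one, H.one_mul]

/-- `{1}` is a filter. -/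
lemma my_singleton_filter : H.IsFilter {H.one} := by
  refine ⟨rfl, ?_, ?_⟩
  · rintro x rfl y rfl
    exact H.mul_one _
  · rintro x rfl y hy
    have : H.imp H.one y = H.one := hy
    rw [H.my_one_imp] at this
    exact this

/-- If `a ≠ 1`, there is a value of `a`. -/
lemma my_exists_value (a : M) (ha : a ≠ H.one) :
    ∃ V : Set M, H.IsValueOf V a := by
  set S : Set (Set M) := {F | H.IsFilter F ∧ a ∉ F} with hS
  have hsing : ({H.one} : Set M) ∈ S := ⟨H.my_singleton_filter, fun h => ha h⟩
  have hzorn : ∀ c ⊆ S, IsChain (· ⊆ ·) c → c.Nonempty →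
      ∃ ub ∈ S, ∀ s ∈ c, s ⊆ ub := by
    rintro c hcS hchain ⟨F₀, hF₀⟩
    refine ⟨⋃₀ c, ⟨⟨?_, ?_, ?_⟩, ?_⟩, fun s hs => Set.subset_sUnion_of_mem hs⟩
    · exact ⟨F₀, hF₀, (hcS hF₀).1.1⟩
    · rintro x ⟨s, hs, hx⟩ y ⟨t, ht, hy⟩
      rcases hchain.total hs ht with hst | hts
      · exact ⟨t, ht, (hcS ht).1.2.1 x (hst hx) y hy⟩
      · exact ⟨s, hs, (hcS hs).1.2.1 x hx y (hts hy)⟩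
    · rintro x ⟨s, hs, hx⟩ y hxy
      exact ⟨s, hs, (hcS hs).1.2.2 x hx y hxy⟩
    · rintro ⟨s, hs, hax⟩
      exact (hcS hs).2 hax
  obtain ⟨m, -, hm⟩ := zorn_subset_nonempty S hzorn _ hsing
  exact ⟨m, hm.prop.1, hm.prop.2, fun W hW hmW haW =>
    le_antisymm (hm.2 ⟨hW, haW⟩ hmW) hmW⟩

end PseudoHoop

theorem basicPseudoHoop_le_iff_values {M : Type u} (H : PseudoHoop M)
    (hB : H.Basic) :
    ∀ f g : M, H.le f g ↔ ∀ V : Set M, H.IsValue V → H.imp f g ∈ V := by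
  intro f g
  constructor
  · intro hle V hV
    obtain ⟨g', -, hVfil, -⟩ := hV
    rw [hle]
    exact hVfil.1
  · intro h
    by_contra hle
    have ha : H.imp f g ≠ H.one := hle
    obtain ⟨V, hV⟩ := H.my_exists_value _ ha
    exact hV.2.1 (h V ⟨_, ha, hV⟩)
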